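/- Let ΔABC be a triangle in the hyperbolic plane (or in any hyperbolic space of constant curvature -1) with side lengths a = d(B,C), b = d(A,C), c = d(A,B), and let A denote the interior angle at vertex A. Then 0 ≤ b + c - a ≤ log(2/(1 - cos A)). -/

import Mathlib

/-!
Put `t = (1 - cos A) / 2 ∈ (0, 1]`. The law of cosines says that `cosh a` is the convex
combination `t cosh (b + c) + (1 - t) cosh (b - c)`. As `cosh (b - c)` lies between `1` and
`cosh (b + c)`, this gives `t cosh (b + c) + 1 - t ≤ cosh a ≤ cosh (b + c)`. The right bound is
`a ≤ b + c`; the left one dominates `cosh (b + c + log t)` as soon as `b + c + log t ≥ 0`,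
which gives `b + c + log t ≤ a`, i.e. `b + c - a ≤ log (1 / t)`.
-/

open Real

lemma cosh_mul_cosh_sub_sinh_mul_sinh_mul (b c θ : ℝ) :
    cosh b * cosh c - sinh b * sinh c * θ =
      (1 - θ) / 2 * cosh (b + c) + (1 + θ) / 2 * cosh (b - c) := by
  rw [cosh_add, cosh_sub]
  ring

lemma cosh_sub_le_cosh_add {b c : ℝ} (hb : 0 ≤ b) (hc : 0 ≤ c) :
    cosh (b - c) ≤ cosh (b + c) := by
  rw [cosh_le_cosh, abs_of_nonneg (add_nonneg hb hc), abs_le]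
  constructor <;> linarith

lemma cosh_add_log_eq (s : ℝ) {t : ℝ} (ht : 0 < t) :
    cosh (s + log t) = t * cosh s + (1 - t ^ 2) / 2 * exp (-(s + log t)) := by
  rw [cosh_eq, cosh_eq, exp_add, neg_add, exp_add, exp_neg (log t), exp_log ht]
  field_simp
  ring

lemma cosh_add_log_le {s t : ℝ} (ht0 : 0 < t) (ht1 : t ≤ 1) (hs : 0 ≤ s + log t) :
    cosh (s + log t) ≤ t * cosh s + (1 - t) := by
  have hexp : exp (-(s + log t)) ≤ 1 := exp_le_one_iff.2 (neg_nonpos.2 hs)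
  have ht2 : 0 ≤ 1 - t ^ 2 := by nlinarith
  calc cosh (s + log t) = t * cosh s + (1 - t ^ 2) / 2 * exp (-(s + log t)) :=
        cosh_add_log_eq s ht0
    _ ≤ t * cosh s + (1 - t ^ 2) / 2 := by gcongr; exact mul_le_of_le_one_right (by positivity) hexp
    _ ≤ t * cosh s + (1 - t) := by nlinarith [sq_nonneg (1 - t)]

/-- Reversed triangle inequality in hyperbolic geometry: for a hyperbolic triangle
with side lengths `a = d(B,C)`, `b = d(A,C)`, `c = d(A,B)` and interior angle `A`
at the vertex `A`, encoded via the hyperbolic law of cosines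
`cosh a = cosh b cosh c - sinh b sinh c cos A`, one has
`0 ≤ b + c - a ≤ log (2 / (1 - cos A))`. -/
theorem reversed_triangle_inequality (a b c A : ℝ)
    (ha : 0 ≤ a) (hb : 0 ≤ b) (hc : 0 ≤ c)
    (hA0 : 0 < A) (hAπ : A ≤ Real.pi)
    (hlaw : Real.cosh a =
      Real.cosh b * Real.cosh c - Real.sinh b * Real.sinh c * Real.cos A) :
    0 ≤ b + c - a ∧ b + c - a ≤ Real.log (2 / (1 - Real.cos A)) := by
  set t := (1 - cos A) / 2 with ht
  have ht0 : 0 < t := by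
    have := cos_lt_cos_of_nonneg_of_le_pi le_rfl hAπ hA0
    rw [cos_zero] at this
    linarith
  have ht1 : t ≤ 1 := by linarith [neg_one_le_cos A]
  have hconvex : cosh a = t * cosh (b + c) + (1 - t) * cosh (b - c) := by
    rw [hlaw, cosh_mul_cosh_sub_sinh_mul_sinh_mul]
    ring
  have htriangle : a ≤ b + c := by
    have : cosh a ≤ cosh (b + c) := by
      rw [hconvex]
      linarith [mul_le_mul_of_nonneg_left (cosh_sub_le_cosh_add hb hc) (sub_nonneg.2 ht1)]
    exact (le_abs_self a).trans ((cosh_le_cosh.1 this).trans_eq (abs_of_nonneg (by linarith)))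
  have hreversed : b + c + log t ≤ a := by
    rcases le_or_gt (b + c + log t) 0 with hneg | hpos
    · linarith
    have : cosh (b + c + log t) ≤ cosh a := by
      rw [hconvex]
      have := le_mul_of_one_le_right (sub_nonneg.2 ht1) (one_le_cosh (b - c))
      linarith [cosh_add_log_le ht0 ht1 hpos.le]
    rwa [cosh_le_cosh, abs_of_pos hpos, abs_of_nonneg ha] at this
  have hlog : log (2 / (1 - cos A)) = -log t := by
    rw [← log_inv, ht, inv_div]
  exact ⟨by linarith, by linarith⟩
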